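/- Define H₂(x,y,u,v) = 2·(x/y)·(1 − f(y³(u²+v²))) and the vector field V₂(x,y,u,v) = (2x, 2y, −3u, −3v) on {y > 0}. Then: (i) V₂ is the infinitesimal generator of the action of the diagonal subgroup of SL(2,ℝ), i.e. d/ds|_{s=0} (e^{2s}z, e^{−3s}w) = (2z, −3w) corresponds to (2x, 2y, −3u, −3v); and (ii) V₂ is the Hamiltonian vector field of H₂ with respect to ω_f: for every point with y > 0 and every index j ∈ {1,2,3,4}, Σ_i (V₂)_i·(Ω_f)_{ij} = ∂_j H₂. -/

import Mathlib

open Matrix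

/-- The coefficient matrix `Ω_f(x,y,u,v)` of the 2-form `ω_f` on
`ℍ²×ℂ ≅ {(x,y,u,v) : y > 0}`, where `f, f′` are evaluated at `t = y³(u²+v²)`. -/
noncomputable def Omf (f : ℝ → ℝ) (x y u v : ℝ) : Matrix (Fin 4) (Fin 4) ℝ :=
  let F := f (y ^ 3 * (u ^ 2 + v ^ 2))
  let F' := deriv f (y ^ 3 * (u ^ 2 + v ^ 2))
  !![0, (-1 + F - 3 * F' * y ^ 3 * (u ^ 2 + v ^ 2)) / y ^ 2, -2 * y ^ 2 * F' * u,
       -2 * y ^ 2 * F' * v;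
     -((-1 + F - 3 * F' * y ^ 3 * (u ^ 2 + v ^ 2)) / y ^ 2), 0, 2 * y ^ 2 * F' * v,
       -2 * y ^ 2 * F' * u;
     -(-2 * y ^ 2 * F' * u), -(2 * y ^ 2 * F' * v), 0, -(4 / 3) * F' * y ^ 3;
     -(-2 * y ^ 2 * F' * v), -(-2 * y ^ 2 * F' * u), -(-(4 / 3) * F' * y ^ 3), 0]


/-- The partial derivative `∂_k g` of a function `g` of `(x,y,u,v)`, with
`∂₁ = ∂/∂x`, `∂₂ = ∂/∂y`, `∂₃ = ∂/∂u`, `∂₄ = ∂/∂v`. -/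
noncomputable def pd (k : Fin 4) (g : ℝ → ℝ → ℝ → ℝ → ℝ) (x y u v : ℝ) : ℝ :=
  ![deriv (fun s => g s y u v) x,
    deriv (fun s => g x s u v) y,
    deriv (fun s => g x y s v) u,
    deriv (fun s => g x y u s) v] k


/-- The Hamiltonian function of the circle action: `H₁ = (2/3)·f(y³(u²+v²))`. -/
noncomputable def H1 (f : ℝ → ℝ) (x y u v : ℝ) : ℝ :=
  (2 / 3) * f (y ^ 3 * (u ^ 2 + v ^ 2))

/-- The Hamiltonian function of the diagonal `ℝ*`-action:
`H₂ = 2(x/y)(1 − f(y³(u²+v²)))`. -/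
noncomputable def H2 (f : ℝ → ℝ) (x y u v : ℝ) : ℝ :=
  2 * (x / y) * (1 - f (y ^ 3 * (u ^ 2 + v ^ 2)))


theorem stmt11 (f : ℝ → ℝ) (hf : ContDiff ℝ (⊤ : ℕ∞) f) :
    -- (i) the infinitesimal generator of the diagonal action
    -- `s ↦ (e^{2s}z, e^{−3s}w)` is `(2z, −3w)`, which corresponds to
    -- `(2x, 2y, −3u, −3v)`:
    (∀ z w : ℂ,
      deriv (fun s : ℝ =>
          (((Real.exp (2 * s) : ℝ) : ℂ) * z,
           ((Real.exp (-(3 * s)) : ℝ) : ℂ) * w)) 0 = (2 * z, -3 * w) ∧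
      ![(2 * z).re, (2 * z).im, (-3 * w).re, (-3 * w).im] =
        ![2 * z.re, 2 * z.im, -3 * w.re, -3 * w.im]) ∧
    -- (ii) `V₂ = (2x, 2y, −3u, −3v)` is the Hamiltonian vector field of `H₂`
    -- with respect to `ω_f`:
    (∀ x y u v : ℝ, 0 < y → ∀ j : Fin 4,
      Matrix.vecMul ![2 * x, 2 * y, -3 * u, -3 * v] (Omf f x y u v) j =
        pd j (H2 f) x y u v) := by
  have hfd : Differentiable ℝ f := hf.differentiable (by simp)
  constructor
  · intro z w
    constructor
    · have h1 : HasDerivAt (fun s : ℝ => Real.exp (2 * s)) 2 0 := by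
        simpa using (((hasDerivAt_id (0:ℝ)).const_mul 2).exp)
      have h2 : HasDerivAt (fun s : ℝ => Real.exp (-(3 * s))) (-3) 0 := by
        simpa using ((((hasDerivAt_id (0:ℝ)).const_mul 3).neg).exp)
      have H1' : HasDerivAt (fun s : ℝ => ((Real.exp (2 * s) : ℝ) : ℂ) * z)
          ((2 : ℂ) * z) 0 := by
        simpa using (h1.ofReal_comp.mul_const z)
      have H2' : HasDerivAt (fun s : ℝ => ((Real.exp (-(3 * s)) : ℝ) : ℂ) * w)
          ((-3 : ℂ) * w) 0 := by
        simpa using (h2.ofReal_comp.mul_const w)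
      have := (H1'.prodMk H2').deriv
      simpa using this
    · funext k
      fin_cases k <;> simp [Complex.mul_re, Complex.mul_im] <;> ring
  · intro x y u v hy j
    have hy0 : y ≠ 0 := ne_of_gt hy
    set c : ℝ := u ^ 2 + v ^ 2 with hc
    set F : ℝ := f (y ^ 3 * c) with hF
    set F' : ℝ := deriv f (y ^ 3 * c) with hF'
    -- partial derivatives of H2
    have hx : deriv (fun s => H2 f s y u v) x = 2 * (1 - F) / y := by
      have : HasDerivAt (fun s => H2 f s y u v) (2 * (1 - F) / y) x := by
        unfold H2
        have : HasDerivAt (fun s : ℝ => 2 * (s / y) * (1 - F))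
            (2 / y * (1 - F)) x := by
          simpa [div_eq_mul_inv] using (((hasDerivAt_id x).div_const y).const_mul 2).mul_const (1 - F)
        convert this using 1 <;> ring
      exact this.deriv
    have hyd : deriv (fun s => H2 f x s u v) y =
        -2 * x * (1 - F) / y ^ 2 - 2 * (x / y) * (F' * (3 * y ^ 2 * c)) := by
      have hinner : HasDerivAt (fun s : ℝ => s ^ 3 * c) (3 * y ^ 2 * c) y := by
        simpa [mul_comm] using (hasDerivAt_pow 3 y).mul_const c
      have hfc : HasDerivAt (fun s : ℝ => f (s ^ 3 * c)) (F' * (3 * y ^ 2 * c)) y :=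
        ((hfd _).hasDerivAt).comp y hinner
      have hone : HasDerivAt (fun s : ℝ => 1 - f (s ^ 3 * c))
          (-(F' * (3 * y ^ 2 * c))) y := hfc.const_sub 1
      have hxy : HasDerivAt (fun s : ℝ => 2 * (x / s)) (-(2 * x) / y ^ 2) y := by
        have := ((hasDerivAt_inv hy0).const_mul (2 * x))
        simpa [mul_div_assoc, div_eq_mul_inv, mul_comm, mul_assoc, mul_left_comm] using this
      have := hxy.mul hone
      unfold H2
      rw [show deriv (fun s => 2 * (x / s) * (1 - f (s ^ 3 * (u ^ 2 + v ^ 2)))) y = _ from this.deriv]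
      field_simp
      ring
    have hu : deriv (fun s => H2 f x y s v) u =
        -2 * (x / y) * (F' * (y ^ 3 * (2 * u))) := by
      have hinner : HasDerivAt (fun s : ℝ => y ^ 3 * (s ^ 2 + v ^ 2))
          (y ^ 3 * (2 * u)) u := by
        have : HasDerivAt (fun s : ℝ => s ^ 2 + v ^ 2) (2 * u) u := by
          simpa using (hasDerivAt_pow 2 u).add_const (v ^ 2)
        simpa using this.const_mul (y ^ 3)
      have hfc : HasDerivAt (fun s : ℝ => f (y ^ 3 * (s ^ 2 + v ^ 2)))
          (F' * (y ^ 3 * (2 * u))) u := by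
        have : F' = deriv f (y ^ 3 * (u ^ 2 + v ^ 2)) := by rw [hF', hc]
        rw [this]
        exact ((hfd _).hasDerivAt).comp u hinner
      have := (hfc.const_sub 1).const_mul (2 * (x / y))
      unfold H2
      rw [this.deriv]; ring
    have hv : deriv (fun s => H2 f x y u s) v =
        -2 * (x / y) * (F' * (y ^ 3 * (2 * v))) := by
      have hinner : HasDerivAt (fun s : ℝ => y ^ 3 * (u ^ 2 + s ^ 2))
          (y ^ 3 * (2 * v)) v := by
        have : HasDerivAt (fun s : ℝ => u ^ 2 + s ^ 2) (2 * v) v := by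
          simpa using (hasDerivAt_pow 2 v).const_add (u ^ 2)
        simpa using this.const_mul (y ^ 3)
      have hfc : HasDerivAt (fun s : ℝ => f (y ^ 3 * (u ^ 2 + s ^ 2)))
          (F' * (y ^ 3 * (2 * v))) v := by
        have : F' = deriv f (y ^ 3 * (u ^ 2 + v ^ 2)) := by rw [hF', hc]
        rw [this]
        exact ((hfd _).hasDerivAt).comp v hinner
      have := (hfc.const_sub 1).const_mul (2 * (x / y))
      unfold H2
      rw [this.deriv]; ring
    fin_cases j <;>
      simp only [pd, Omf, Matrix.vecMul, dotProduct, Fin.sum_univ_four,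
        Matrix.cons_val', Matrix.cons_val_zero, Matrix.cons_val_one, Matrix.head_cons,
        Matrix.empty_val', Matrix.cons_val_fin_one, Matrix.head_fin_const,
        Matrix.cons_val_two, Matrix.cons_val_three, Matrix.tail_cons,
        Matrix.head_fin_const, Fin.isValue, Matrix.of_apply, Fin.reduceFinMk] <;>
      [rw [hx]; rw [hyd]; rw [hu]; rw [hv]] <;>
      simp only [← hc, ← hF, ← hF'] <;> field_simp <;> ring
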